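/- Let γ > 0 and consider the depolarizing dissipator on M_2(ℂ) with jump operators L_1 = √γ·σˣ, L_2 = √γ·σʸ, L_3 = √γ·σᶻ (the Pauli matrices). Then for every time-dependent Hermitian Hamiltonian H : ℝ → M_2(ℂ) (with continuous entries), every pair of solutions ρ, σ of the master equation for L_t = −i[H(t), ·] + Σ_{j=1}^3 D_{L_j} whose values at time s are density matrices satisfies ‖ρ(t) − σ(t)‖₁ ≤ e^{−4γ·(t−s)}·‖ρ(s) − σ(s)‖₁ for all t ≥ s ≥ 0. -/

import Mathlib

/-!
The depolarizing dissipator acts on 2 × 2 matrices as `x ↦ 2γ tr(x) 1 - 4γ x`. The difference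
`Δ = ρ - σ` of two solutions is again a solution; it stays traceless because every driven
Lindbladian is trace-annihilating, so it obeys `Δ' = -i[H, Δ] - 4γ Δ`. The commutator with a
Hermitian `H` is skew for the Frobenius inner product, hence `‖Δ‖_F²` decays exactly like
`e^{-8γ(t - s)}`. Finally, on 2 × 2 matrices `‖A‖₁ ≤ √2 ‖A‖_F`, with equality when `A` is
Hermitian and traceless, as `Δ(s)` is.
-/

open scoped ComplexOrder Kronecker
open Matrix

namespace Paper

variable {n : Type*} [Fintype n] [DecidableEq n]

/-- Trace norm: sum of singular values. -/
noncomputable def traceNorm (A : Matrix n n ℂ) : ℝ :=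
  ∑ i, Real.sqrt ((Matrix.posSemidef_conjTranspose_mul_self A).isHermitian.eigenvalues i)

/-- The dissipator associated with a single jump operator. -/
noncomputable def dissipator (L x : Matrix n n ℂ) : Matrix n n ℂ :=
  L * x * Lᴴ - ((1 : ℂ)/2) • (Lᴴ * L * x + x * (Lᴴ * L))

/-- Total dissipator of a family of jump operators. -/
noncomputable def totalDissipator {m : ℕ} (L : Fin m → Matrix n n ℂ) (x : Matrix n n ℂ) :
    Matrix n n ℂ :=
  ∑ j, dissipator (L j) x

/-- The Hamiltonian commutator term `-i[H, x]`. -/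
noncomputable def hamTerm (H x : Matrix n n ℂ) : Matrix n n ℂ :=
  (-Complex.I) • (H * x - x * H)

/-- A solution of the master equation `ρ' = L_t(ρ)` starting at time `s`
(differentiable entrywise). -/
def IsSolution (Lt : ℝ → Matrix n n ℂ → Matrix n n ℂ) (s : ℝ) (ρ : ℝ → Matrix n n ℂ) : Prop :=
  ∀ t, s ≤ t → ∀ i j, HasDerivAt (fun u => ρ u i j) ((Lt t (ρ t)) i j) t

/-- Density matrix: Hermitian, positive semidefinite, trace one. -/
def IsDensity (ρ : Matrix n n ℂ) : Prop := ρ.PosSemidef ∧ ρ.trace = 1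

/-- Exponential contractivity with constants `K, γ` of a time-dependent Lindbladian. -/
def ExpContractiveWith (Lt : ℝ → Matrix n n ℂ → Matrix n n ℂ) (K γ : ℝ) : Prop :=
  ∀ s t : ℝ, 0 ≤ s → s ≤ t → ∀ ρ σ : ℝ → Matrix n n ℂ,
    IsSolution Lt s ρ → IsSolution Lt s σ → IsDensity (ρ s) → IsDensity (σ s) →
    traceNorm (ρ t - σ t) ≤ K * Real.exp (-γ * (t - s)) * traceNorm (ρ s - σ s)

/-- Exponential contractivity of a time-dependent Lindbladian. -/
def ExpContractive (Lt : ℝ → Matrix n n ℂ → Matrix n n ℂ) : Prop :=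
  ∃ K γ : ℝ, 0 < K ∧ 0 < γ ∧ ExpContractiveWith Lt K γ

/-- Time-dependent Hamiltonian: Hermitian values and continuous entries. -/
def IsHamiltonianFamily (H : ℝ → Matrix n n ℂ) : Prop :=
  (∀ t, (H t).IsHermitian) ∧ ∀ i j, Continuous fun t => H t i j

/-- Driven Lindbladian `x ↦ -i[H(t), x] + D(x)`. -/
noncomputable def driven {m : ℕ} (H : ℝ → Matrix n n ℂ) (L : Fin m → Matrix n n ℂ)
    (t : ℝ) (x : Matrix n n ℂ) : Matrix n n ℂ :=
  hamTerm (H t) x + totalDissipator L x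

/-- Hamiltonian-independent contractivity of a dissipator. -/
def HamIndepContractive {m : ℕ} (L : Fin m → Matrix n n ℂ) : Prop :=
  ∀ H : ℝ → Matrix n n ℂ, IsHamiltonianFamily H → ExpContractive (driven H L)

/-- The operator norm (largest singular value). -/
noncomputable def opNorm (A : Matrix n n ℂ) : ℝ :=
  ‖LinearMap.toContinuousLinearMap (Matrix.toEuclideanLin A)‖

end Paper

namespace Paper

section Frobenius

variable {n : Type*} [Fintype n]

noncomputable def frobeniusNormSq (A : Matrix n n ℂ) : ℝ :=
  ∑ i, ∑ j, ‖A i j‖ ^ 2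

lemma trace_conjTranspose_mul_eq_sum (A B : Matrix n n ℂ) :
    (Aᴴ * B).trace = ∑ i, ∑ j, star (A i j) * B i j := by
  simp only [trace, diag, mul_apply, conjTranspose_apply]
  exact Finset.sum_comm

lemma trace_conjTranspose_mul_self_eq_frobeniusNormSq (A : Matrix n n ℂ) :
    (Aᴴ * A).trace = frobeniusNormSq A := by
  simp [trace_conjTranspose_mul_eq_sum, frobeniusNormSq, Complex.conj_mul']

lemma _root_.Matrix.IsHermitian.im_trace_eq_zero {A : Matrix n n ℂ} (hA : A.IsHermitian) :
    A.trace.im = 0 :=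
  Complex.conj_eq_iff_im.mp <| by rw [← Complex.star_def, ← trace_conjTranspose, hA.eq]

variable [DecidableEq n]

lemma traceNorm_nonneg (A : Matrix n n ℂ) : 0 ≤ traceNorm A :=
  Finset.sum_nonneg fun _ _ => Real.sqrt_nonneg _

lemma sum_eigenvalues_conjTranspose_mul_self (A : Matrix n n ℂ) :
    ∑ i, (posSemidef_conjTranspose_mul_self A).isHermitian.eigenvalues i = frobeniusNormSq A := by
  have h := (posSemidef_conjTranspose_mul_self A).isHermitian.trace_eq_sum_eigenvalues
  rw [trace_conjTranspose_mul_self_eq_frobeniusNormSq] at h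
  exact Complex.ofReal_injective (by simpa using h.symm)

lemma prod_eigenvalues_conjTranspose_mul_self (A : Matrix n n ℂ) :
    ∏ i, (posSemidef_conjTranspose_mul_self A).isHermitian.eigenvalues i = ‖A.det‖ ^ 2 := by
  have h := (posSemidef_conjTranspose_mul_self A).isHermitian.det_eq_prod_eigenvalues
  rw [det_mul, det_conjTranspose, Complex.star_def, Complex.conj_mul'] at h
  exact Complex.ofReal_injective (by simpa using h.symm)

lemma traceNorm_sq_le_card_mul_frobeniusNormSq (A : Matrix n n ℂ) :
    traceNorm A ^ 2 ≤ Fintype.card n * frobeniusNormSq A := by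
  have hμ := (posSemidef_conjTranspose_mul_self A).eigenvalues_nonneg
  refine sq_sum_le_card_mul_sum_sq.trans_eq ?_
  simp only [Finset.card_univ, Real.sq_sqrt (hμ _), sum_eigenvalues_conjTranspose_mul_self]

end Frobenius

section FinTwo

lemma traceNorm_le_sqrt_two_mul_frobeniusNormSq (A : Matrix (Fin 2) (Fin 2) ℂ) :
    traceNorm A ≤ √(2 * frobeniusNormSq A) :=
  Real.le_sqrt_of_sq_le <| by
    simpa using traceNorm_sq_le_card_mul_frobeniusNormSq A

lemma traceNorm_sq_fin_two (A : Matrix (Fin 2) (Fin 2) ℂ) :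
    traceNorm A ^ 2 = frobeniusNormSq A + 2 * ‖A.det‖ := by
  have hμ := (posSemidef_conjTranspose_mul_self A).eigenvalues_nonneg
  have hsum := sum_eigenvalues_conjTranspose_mul_self A
  have hprod := prod_eigenvalues_conjTranspose_mul_self A
  rw [Fin.sum_univ_two] at hsum
  rw [Fin.prod_univ_two] at hprod
  have hdet : √((posSemidef_conjTranspose_mul_self A).isHermitian.eigenvalues 0) *
      √((posSemidef_conjTranspose_mul_self A).isHermitian.eigenvalues 1) = ‖A.det‖ := by
    rw [← Real.sqrt_mul (hμ 0), hprod, Real.sqrt_sq (norm_nonneg _)]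
  rw [traceNorm, Fin.sum_univ_two, add_sq, Real.sq_sqrt (hμ 0), Real.sq_sqrt (hμ 1), ← hsum,
    mul_assoc, hdet]
  ring

lemma two_mul_norm_det_eq_frobeniusNormSq {A : Matrix (Fin 2) (Fin 2) ℂ} (hA : A.IsHermitian)
    (htr : A.trace = 0) : 2 * ‖A.det‖ = frobeniusNormSq A := by
  obtain ⟨a, ha⟩ : ∃ a : ℝ, A 0 0 = a := Complex.conj_eq_iff_real.mp (hA.apply 0 0)
  have h11 : A 1 1 = -a := by
    rw [trace_fin_two, ha] at htr; linear_combination htr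
  have h10 : A 1 0 = star (A 0 1) := (hA.apply 1 0).symm
  have hdet : A.det = -((a ^ 2 + ‖A 0 1‖ ^ 2 : ℝ) : ℂ) := by
    rw [det_fin_two, ha, h11, h10, mul_comm (A 0 1), Complex.star_def, Complex.conj_mul']
    push_cast; ring
  rw [hdet, norm_neg, Complex.norm_real, Real.norm_of_nonneg (by positivity), frobeniusNormSq]
  simp only [Fin.sum_univ_two, ha, h11, h10, norm_neg, RCLike.star_def, RCLike.norm_conj,
    Complex.norm_real, Real.norm_eq_abs, sq_abs]
  ring

lemma traceNorm_eq_sqrt_two_mul_frobeniusNormSq {A : Matrix (Fin 2) (Fin 2) ℂ}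
    (hA : A.IsHermitian) (htr : A.trace = 0) : traceNorm A = √(2 * frobeniusNormSq A) := by
  rw [← Real.sqrt_sq (traceNorm_nonneg A), traceNorm_sq_fin_two,
    two_mul_norm_det_eq_frobeniusNormSq hA htr, two_mul]

end FinTwo

section Generator

variable {n : Type*} [Fintype n]

lemma trace_hamTerm (H x : Matrix n n ℂ) : (hamTerm H x).trace = 0 := by
  simp [hamTerm, trace_sub, trace_mul_comm H x]

lemma trace_dissipator (L x : Matrix n n ℂ) : (dissipator L x).trace = 0 := by
  simp only [dissipator, trace_sub, trace_smul, trace_add, trace_mul_cycle L x Lᴴ,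
    trace_mul_comm x (Lᴴ * L)]
  ring

lemma hamTerm_sub (H x y : Matrix n n ℂ) : hamTerm H x - hamTerm H y = hamTerm H (x - y) := by
  rw [hamTerm, hamTerm, hamTerm, ← smul_sub, mul_sub, sub_mul]
  congr 1
  abel

lemma dissipator_sub (L x y : Matrix n n ℂ) :
    dissipator L x - dissipator L y = dissipator L (x - y) := by
  simp only [dissipator, mul_sub, sub_mul, smul_sub, smul_add]
  abel

lemma re_trace_conjTranspose_mul_hamTerm {H : Matrix n n ℂ} (hH : H.IsHermitian)
    (x : Matrix n n ℂ) : (xᴴ * hamTerm H x).trace.re = 0 := by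
  have hsplit : (xᴴ * hamTerm H x).trace =
      -Complex.I * ((xᴴ * H * x).trace - (x * H * xᴴ).trace) := by
    rw [hamTerm, Matrix.mul_smul, trace_smul, mul_sub, trace_sub, ← Matrix.mul_assoc,
      ← Matrix.mul_assoc, trace_mul_cycle x H xᴴ, smul_eq_mul]
  simp [hsplit, (isHermitian_conjTranspose_mul_mul x hH).im_trace_eq_zero,
    (isHermitian_mul_mul_conjTranspose x hH).im_trace_eq_zero]

variable {m : ℕ}

lemma trace_driven (H : ℝ → Matrix n n ℂ) (L : Fin m → Matrix n n ℂ) (t : ℝ)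
    (x : Matrix n n ℂ) : (driven H L t x).trace = 0 := by
  simp [driven, totalDissipator, trace_hamTerm, trace_sum, trace_dissipator]

lemma driven_sub (H : ℝ → Matrix n n ℂ) (L : Fin m → Matrix n n ℂ) (t : ℝ)
    (x y : Matrix n n ℂ) : driven H L t x - driven H L t y = driven H L t (x - y) := by
  simp only [driven, totalDissipator, ← hamTerm_sub, ← dissipator_sub, Finset.sum_sub_distrib]
  abel

end Generator

lemma eq_exp_mul_smul_of_hasDerivAt {E : Type*} [NormedAddCommGroup E] [NormedSpace ℝ E]
    {f : ℝ → E} {c s : ℝ} (hf : ∀ u, s ≤ u → HasDerivAt f (c • f u) u) {t : ℝ}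
    (hst : s ≤ t) : f t = Real.exp (c * (t - s)) • f s := by
  have hg : ∀ u, s ≤ u → HasDerivAt (fun u => Real.exp (-c * (u - s)) • f u) 0 u := by
    intro u hu
    have hexp : HasDerivAt (fun u => Real.exp (-c * (u - s)))
        (Real.exp (-c * (u - s)) * -c) u := by
      simpa using (((hasDerivAt_id u).sub_const s).const_mul (-c)).exp
    have h := hexp.smul (hf u hu)
    rwa [smul_smul, ← add_smul, mul_neg, add_neg_cancel, zero_smul] at h
  have hconst := constant_of_has_deriv_right_zero
    (fun u hu => (hg u hu.1).continuousAt.continuousWithinAt)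
    (fun u hu => (hg u hu.1).hasDerivWithinAt) t ⟨hst, le_rfl⟩
  rw [sub_self, mul_zero, Real.exp_zero, one_smul] at hconst
  rw [← hconst, smul_smul, ← Real.exp_add, neg_mul, add_neg_cancel, Real.exp_zero, one_smul]

section Solution

variable {n : Type*} [Fintype n] {s : ℝ} {ρ : ℝ → Matrix n n ℂ}

lemma IsSolution.hasDerivAt_trace {Lt : ℝ → Matrix n n ℂ → Matrix n n ℂ}
    (hρ : IsSolution Lt s ρ) {t : ℝ} (ht : s ≤ t) :
    HasDerivAt (fun u => (ρ u).trace) (Lt t (ρ t)).trace t :=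
  HasDerivAt.fun_sum fun i _ => hρ t ht i i

lemma IsSolution.hasDerivAt_frobeniusNormSq {Lt : ℝ → Matrix n n ℂ → Matrix n n ℂ}
    (hρ : IsSolution Lt s ρ) {t : ℝ} (ht : s ≤ t) :
    HasDerivAt (fun u => frobeniusNormSq (ρ u)) (2 * ((ρ t)ᴴ * Lt t (ρ t)).trace.re) t := by
  have h : ∀ i j, HasDerivAt (fun u => ‖ρ u i j‖ ^ 2)
      (2 * (star (ρ t i j) * Lt t (ρ t) i j).re) t := fun i j => by
    simpa [Complex.inner, mul_comm] using (hρ t ht i j).norm_sq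
  simp only [trace_conjTranspose_mul_eq_sum, Complex.re_sum, Finset.mul_sum]
  exact HasDerivAt.fun_sum fun i _ => HasDerivAt.fun_sum fun j _ => h i j

variable {m : ℕ} {H : ℝ → Matrix n n ℂ} {L : Fin m → Matrix n n ℂ}

lemma IsSolution.sub {σ : ℝ → Matrix n n ℂ} (hρ : IsSolution (driven H L) s ρ)
    (hσ : IsSolution (driven H L) s σ) : IsSolution (driven H L) s (ρ - σ) := fun t ht i j => by
  have h := (hρ t ht i j).sub (hσ t ht i j)
  rw [← Matrix.sub_apply, driven_sub] at h
  exact h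

lemma IsSolution.trace_eq (hρ : IsSolution (driven H L) s ρ) {t : ℝ} (hst : s ≤ t) :
    (ρ t).trace = (ρ s).trace := by
  have h := eq_exp_mul_smul_of_hasDerivAt (f := fun u => (ρ u).trace) (c := 0)
    (fun u hu => by simpa [trace_driven] using hρ.hasDerivAt_trace hu) hst
  rwa [zero_mul, Real.exp_zero, one_smul] at h

end Solution

section Depolarizing

variable {n : Type*} [Fintype n] {m : ℕ}

lemma dissipator_smul (c : ℂ) (L x : Matrix n n ℂ) :
    dissipator (c • L) x = (star c * c) • dissipator L x := by
  simp only [dissipator, conjTranspose_smul, smul_mul_assoc, Matrix.mul_smul, smul_smul, smul_sub,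
    smul_add]
  match_scalars <;> ring

lemma totalDissipator_smul (c : ℂ) (L : Fin m → Matrix n n ℂ) (x : Matrix n n ℂ) :
    totalDissipator (fun j => c • L j) x = (star c * c) • totalDissipator L x := by
  simp only [totalDissipator, dissipator_smul, Finset.smul_sum]

def pauli : Fin 3 → Matrix (Fin 2) (Fin 2) ℂ :=
  ![!![0, 1; 1, 0], !![0, -Complex.I; Complex.I, 0], !![1, 0; 0, -1]]

lemma totalDissipator_pauli (x : Matrix (Fin 2) (Fin 2) ℂ) :
    totalDissipator pauli x = (2 * x.trace) • (1 : Matrix (Fin 2) (Fin 2) ℂ) - (4 : ℂ) • x := by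
  simp only [totalDissipator, Fin.sum_univ_three, pauli, cons_val_zero, cons_val_one,
    cons_val_two, head_cons, tail_cons]
  ext i j
  fin_cases i <;> fin_cases j <;>
    simp [dissipator, mul_apply, Fin.sum_univ_two, trace_fin_two, one_apply, vecMul,
      dotProduct] <;>
    ring_nf <;> simp [Complex.I_sq] <;> ring

lemma re_trace_conjTranspose_mul_driven_depolarizing {γ : ℝ} (hγ : 0 ≤ γ)
    {H : ℝ → Matrix (Fin 2) (Fin 2) ℂ} {t : ℝ} (hH : (H t).IsHermitian)
    {x : Matrix (Fin 2) (Fin 2) ℂ} (hx : x.trace = 0) :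
    (xᴴ * driven H (fun j => (√γ : ℂ) • pauli j) t x).trace.re = -(4 * γ) * frobeniusNormSq x := by
  have hγ' : star (√γ : ℂ) * √γ = γ := by
    rw [Complex.star_def, Complex.conj_ofReal, ← Complex.ofReal_mul, Real.mul_self_sqrt hγ]
  rw [driven, totalDissipator_smul, totalDissipator_pauli, hx, hγ', mul_add, trace_add,
    Complex.add_re, re_trace_conjTranspose_mul_hamTerm hH]
  simp [trace_conjTranspose_mul_self_eq_frobeniusNormSq, mul_assoc, mul_left_comm]

end Depolarizing

/-- the depolarizing dissipator with jump operators `√γ σˣ, √γ σʸ, √γ σᶻ`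
contracts at rate `4γ` independently of the (time-dependent) Hamiltonian. -/
theorem depolarizing_contraction_rate (γ : ℝ) (hγ : 0 < γ)
    (L : Fin 3 → Matrix (Fin 2) (Fin 2) ℂ)
    (hL : L = fun j => (Real.sqrt γ : ℂ) •
      ![!![0, 1; 1, 0], !![0, -Complex.I; Complex.I, 0], !![1, 0; 0, -1]] j) :
    ∀ H : ℝ → Matrix (Fin 2) (Fin 2) ℂ, IsHamiltonianFamily H →
      ∀ s t : ℝ, 0 ≤ s → s ≤ t → ∀ ρ σ : ℝ → Matrix (Fin 2) (Fin 2) ℂ,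
        IsSolution (driven H L) s ρ → IsSolution (driven H L) s σ →
        IsDensity (ρ s) → IsDensity (σ s) →
        traceNorm (ρ t - σ t) ≤
          Real.exp (-(4 * γ) * (t - s)) * traceNorm (ρ s - σ s) := by
  intro H hH s t _ hst ρ σ hρ hσ hρs hσs
  replace hL : L = fun j => (√γ : ℂ) • pauli j := hL
  subst hL
  change traceNorm ((ρ - σ) t) ≤ _ * traceNorm ((ρ - σ) s)
  have hΔ := hρ.sub hσ
  have htr : ∀ u, s ≤ u → ((ρ - σ) u).trace = 0 := fun u hu => by
    rw [hΔ.trace_eq hu, Pi.sub_apply, trace_sub, hρs.2, hσs.2, sub_self]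
  have hdecay : frobeniusNormSq ((ρ - σ) t) =
      Real.exp (-(8 * γ) * (t - s)) * frobeniusNormSq ((ρ - σ) s) := by
    refine eq_exp_mul_smul_of_hasDerivAt (f := fun u => frobeniusNormSq ((ρ - σ) u))
      (fun u hu => ?_) hst
    have h := hΔ.hasDerivAt_frobeniusNormSq hu
    rw [re_trace_conjTranspose_mul_driven_depolarizing hγ.le (hH.1 u) (htr u hu)] at h
    exact h.congr_deriv (by rw [smul_eq_mul]; ring)
  have hexp : Real.exp (-(8 * γ) * (t - s)) = Real.exp (-(4 * γ) * (t - s)) ^ 2 := by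
    rw [← Real.exp_nat_mul]
    ring_nf
  calc traceNorm ((ρ - σ) t)
      ≤ √(2 * frobeniusNormSq ((ρ - σ) t)) := traceNorm_le_sqrt_two_mul_frobeniusNormSq _
    _ = Real.exp (-(4 * γ) * (t - s)) * √(2 * frobeniusNormSq ((ρ - σ) s)) := by
      rw [hdecay, hexp, mul_left_comm, Real.sqrt_mul (sq_nonneg _),
        Real.sqrt_sq (Real.exp_pos _).le]
    _ = Real.exp (-(4 * γ) * (t - s)) * traceNorm ((ρ - σ) s) := by
      rw [traceNorm_eq_sqrt_two_mul_frobeniusNormSq (A := (ρ - σ) s) (hρs.1.1.sub hσs.1.1)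
        (htr s le_rfl)]

end Paper
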